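/- arXiv:2401.02368 — 3 statements merged into one kernel-verified Lean document; each statement's English description precedes it below -/
import Mathlib

section
/- For every n ≥ 1, the state φ admits no tensor-product decomposition φ = φ_S ⊗ φ_{S̄} across any bipartition of the 2n tensor factors into a nonempty set S and its nonempty complement S̄ (i.e., φ is entangled across every cut). -/
noncomputable section

/-- Configurations of a line of `2n` particles, grouped into `n` consecutive pairs,
where pair `k` consists of particle `2k+1` (dimension 4) and particle `2k+2` (dimension 2)
(1-based numbering).  A vector of the chain Hilbert space `⊗_{i=1}^{2n} ℋ_i` is a function
`Conf n → ℂ`. -/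
abbrev Conf (n : ℕ) := Fin n → Fin 4 × Fin 2

/-- Particles of the chain: `(k, false)` is the `ℂ⁴` particle of pair `k` (particle `2k+1`),
`(k, true)` is the `ℂ²` particle of pair `k` (particle `2k+2`). -/
abbrev Particle (n : ℕ) := Fin n × Bool

/-- `f : Conf n → ℂ` depends only on the particles in `S`. -/
def DependsOnlyOn {n : ℕ} (S : Set (Particle n)) (f : Conf n → ℂ) : Prop :=
  ∀ x y : Conf n,
    (∀ k : Fin n, ((k, false) ∈ S → (x k).1 = (y k).1) ∧ ((k, true) ∈ S → (x k).2 = (y k).2)) →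
    f x = f y

/-- `ψ` admits a tensor-product decomposition `ψ = ψ_S ⊗ ψ_{S̄}` across the bipartition
`S / Sᶜ` of the `2n` tensor factors. -/
def ProductAcross {n : ℕ} (S : Set (Particle n)) (ψ : Conf n → ℂ) : Prop :=
  ∃ f g : Conf n → ℂ,
    DependsOnlyOn S f ∧ DependsOnlyOn Sᶜ g ∧ ∀ x, ψ x = f x * g x

/-- `ψ` is entangled across every cut: it admits no tensor-product decomposition across any
bipartition of the `2n` tensor factors into a nonempty set and its nonempty complement. -/
def EntangledAllCuts {n : ℕ} (ψ : Conf n → ℂ) : Prop :=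
  ∀ S : Set (Particle n), S.Nonempty → Sᶜ.Nonempty → ¬ ProductAcross S ψ

/-- Amplitudes of the pair state `|*⟩ = (1/√2)(|2⟩|0⟩ + |3⟩|1⟩)` on `ℂ⁴ ⊗ ℂ²`. -/
def starCoeff (c : Fin 4 × Fin 2) : ℂ :=
  if c = (2, 0) then (Real.sqrt 2)⁻¹ else if c = (3, 1) then (Real.sqrt 2)⁻¹ else 0

/-- Amplitudes of the pair state `|1⟩|0⟩ + |2⟩|1⟩` on `ℂ⁴ ⊗ ℂ²`. -/
def midCoeff (c : Fin 4 × Fin 2) : ℂ :=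
  if c = (1, 0) then 1 else if c = (2, 1) then 1 else 0

/-- Amplitudes of the pair state `|0⟩|0⟩` on `ℂ⁴ ⊗ ℂ²`. -/
def zeroCoeff (c : Fin 4 × Fin 2) : ℂ := if c = (0, 0) then 1 else 0

/-- The (unnormalized) state
`φ = Σ_{k=1}^{n} |*⟩^{⊗(k−1)} ⊗ (|1⟩|0⟩ + |2⟩|1⟩) ⊗ (|0⟩|0⟩)^{⊗(n−k)}`. -/
def phiState (n : ℕ) : Conf n → ℂ := fun x =>
  ∑ k : Fin n, ∏ j : Fin n,
    (if j < k then starCoeff (x j) else if j = k then midCoeff (x j) else zeroCoeff (x j))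

/-! If `ψ = f ⊗ g` across `S`, the support of `ψ` is closed under `mix S`: taking the `S`-part of
one configuration and the `Sᶜ`-part of another. The support of `φ` contains the configurations
`|2⟩|0⟩ ⋯ |2⟩|0⟩ m |0⟩|0⟩ ⋯ |0⟩|0⟩` with `m ∈ {|1⟩|0⟩, |2⟩|1⟩}` at pair `k`, while `φ` vanishes unless
some pair carries `|1⟩|0⟩` or `|2⟩|1⟩`, and vanishes if `|1⟩|0⟩` sits at two pairs. A cut that splits
pair `k` mixes `m = |1⟩|0⟩` with `m = |2⟩|1⟩` at `k` into `|1⟩|1⟩` or `|2⟩|0⟩`; a cut that splits no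
pair separates two pairs `k ≠ k'` and mixes the configurations with `|1⟩|0⟩` at `k` and at `k'` into
one with `|1⟩|0⟩` at both. -/

open scoped Classical in
def mix {n : ℕ} (S : Set (Particle n)) (x y : Conf n) : Conf n :=
  fun k => (if (k, false) ∈ S then (x k).1 else (y k).1,
            if (k, true) ∈ S then (x k).2 else (y k).2)

section Mix

variable {n : ℕ} {S : Set (Particle n)}

theorem DependsOnlyOn.apply_mix_left {f : Conf n → ℂ} (hf : DependsOnlyOn S f) (x y : Conf n) :
    f (mix S x y) = f x :=
  hf _ _ fun k => ⟨fun h => by simp [mix, h], fun h => by simp [mix, h]⟩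

theorem DependsOnlyOn.apply_mix_right {g : Conf n → ℂ} (hg : DependsOnlyOn Sᶜ g) (x y : Conf n) :
    g (mix S x y) = g y :=
  hg _ _ fun k => ⟨fun h => by simp [mix, Set.notMem_of_mem_compl h],
    fun h => by simp [mix, Set.notMem_of_mem_compl h]⟩

theorem ProductAcross.apply_mix_ne_zero {ψ : Conf n → ℂ} (h : ProductAcross S ψ) {x y : Conf n}
    (hx : ψ x ≠ 0) (hy : ψ y ≠ 0) : ψ (mix S x y) ≠ 0 := by
  obtain ⟨f, g, hf, hg, hψ⟩ := h
  rw [hψ] at hx hy ⊢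
  rw [hf.apply_mix_left, hg.apply_mix_right]
  exact mul_ne_zero (left_ne_zero_of_mul hx) (right_ne_zero_of_mul hy)

theorem mix_apply_of_eq {x y : Conf n} {k : Fin n} (h : x k = y k) : mix S x y k = x k := by
  simp [mix, h]

theorem mix_apply_of_mem {x y : Conf n} {k : Fin n} (hk : ∀ b, (k, b) ∈ S) :
    mix S x y k = x k := by
  simp [mix, hk]

theorem mix_apply_of_notMem {x y : Conf n} {k : Fin n} (hk : ∀ b, (k, b) ∉ S) :
    mix S x y k = y k := by
  simp [mix, hk]

end Mix

section Support

variable {n : ℕ}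

theorem phiState_eq_zero_of_midCoeff_eq_zero {x : Conf n} (h : ∀ j, midCoeff (x j) = 0) :
    phiState n x = 0 :=
  Finset.sum_eq_zero fun k _ => Finset.prod_eq_zero (Finset.mem_univ k) (by simp [h k])

theorem phiState_eq_zero_of_lt {x : Conf n} {a b : Fin n} (hab : a < b)
    (ha : starCoeff (x a) = 0) (hb : zeroCoeff (x b) = 0) : phiState n x = 0 := by
  refine Finset.sum_eq_zero fun k _ => ?_
  rcases lt_or_ge a k with hak | hka
  · exact Finset.prod_eq_zero (Finset.mem_univ a) (by simp [hak, ha])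
  · have hkb : k < b := hka.trans_lt hab
    exact Finset.prod_eq_zero (Finset.mem_univ b) (by simp [hkb.not_gt, hkb.ne', hb])

theorem phiState_eq_zero_of_ne {x : Conf n} {a b : Fin n} (hab : a ≠ b)
    (ha : x a = (1, 0)) (hb : x b = (1, 0)) : phiState n x = 0 := by
  rcases hab.lt_or_gt with hab | hba
  · exact phiState_eq_zero_of_lt hab (by simp [ha, starCoeff]) (by simp [hb, zeroCoeff])
  · exact phiState_eq_zero_of_lt hba (by simp [hb, starCoeff]) (by simp [ha, zeroCoeff])

def summandConf (a : Fin n) (m : Fin 4 × Fin 2) : Conf n :=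
  fun j => if j < a then (2, 0) else if j = a then m else (0, 0)

theorem summandConf_self (a : Fin n) (m : Fin 4 × Fin 2) : summandConf a m a = m := by
  simp [summandConf]

theorem phiState_summandConf_ne_zero (a : Fin n) {m : Fin 4 × Fin 2} (hm : midCoeff m ≠ 0)
    (hs : starCoeff m = 0) (hz : zeroCoeff m = 0) : phiState n (summandConf a m) ≠ 0 := by
  have hsqrt : (Real.sqrt 2 : ℂ) ≠ 0 := by exact_mod_cast (by positivity : Real.sqrt 2 ≠ 0)
  unfold phiState
  rw [Finset.sum_eq_single a]
  · refine Finset.prod_ne_zero_iff.mpr fun j _ => ?_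
    rcases lt_trichotomy j a with hja | rfl | hja
    · simp [summandConf, hja, starCoeff, hsqrt]
    · simpa [summandConf] using hm
    · simp [summandConf, hja.not_gt, hja.ne', zeroCoeff]
  · intro k _ hka
    refine Finset.prod_eq_zero (Finset.mem_univ a) ?_
    rcases hka.lt_or_gt with hka | hak
    · simp [hka.not_gt, hka.ne', summandConf_self, hz]
    · simp [hak, summandConf_self, hs]
  · simp

theorem phiState_summandConf_one_zero_ne_zero (a : Fin n) :
    phiState n (summandConf a (1, 0)) ≠ 0 :=
  phiState_summandConf_ne_zero a (by simp [midCoeff]) (by simp [starCoeff]) (by simp [zeroCoeff])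

theorem phiState_summandConf_two_one_ne_zero (a : Fin n) :
    phiState n (summandConf a (2, 1)) ≠ 0 :=
  phiState_summandConf_ne_zero a (by simp [midCoeff]) (by simp [starCoeff]) (by simp [zeroCoeff])

end Support

section Cuts

variable {n : ℕ} {S : Set (Particle n)}

theorem phiState_mix_eq_zero_of_split {k : Fin n} (hk : ¬((k, false) ∈ S ↔ (k, true) ∈ S)) :
    phiState n (mix S (summandConf k (1, 0)) (summandConf k (2, 1))) = 0 := by
  refine phiState_eq_zero_of_midCoeff_eq_zero fun j => ?_
  rcases eq_or_ne j k with rfl | hjk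
  · by_cases h : (j, false) ∈ S <;> simp_all [mix, summandConf_self, midCoeff]
  · rw [mix_apply_of_eq (by simp [summandConf, hjk])]
    by_cases hj : j < k <;> simp [summandConf, hj, hjk, midCoeff]

theorem phiState_mix_eq_zero_of_separated {k k' : Fin n} (hk : ∀ b, (k, b) ∈ S)
    (hk' : ∀ b, (k', b) ∉ S) :
    phiState n (mix S (summandConf k (1, 0)) (summandConf k' (1, 0))) = 0 :=
  phiState_eq_zero_of_ne (fun h : k = k' => hk' true (h ▸ hk true))
    (by rw [mix_apply_of_mem hk, summandConf_self])
    (by rw [mix_apply_of_notMem hk', summandConf_self])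

end Cuts

theorem stmt_1_general (n : ℕ) : EntangledAllCuts (phiState n) := by
  rintro S ⟨⟨k, s⟩, hk⟩ ⟨⟨k', s'⟩, hk'⟩ hprod
  by_cases hsplit : ∃ j : Fin n, ¬((j, false) ∈ S ↔ (j, true) ∈ S)
  · obtain ⟨j, hj⟩ := hsplit
    exact hprod.apply_mix_ne_zero (phiState_summandConf_one_zero_ne_zero j)
      (phiState_summandConf_two_one_ne_zero j) (phiState_mix_eq_zero_of_split hj)
  · simp only [not_exists, not_not] at hsplit
    have hkS : ∀ b, (k, b) ∈ S := by
      intro b; cases s <;> cases b <;> simp_all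
    have hk'S : ∀ b, (k', b) ∉ S := by
      intro b; cases s' <;> cases b <;> simp_all
    exact hprod.apply_mix_ne_zero (phiState_summandConf_one_zero_ne_zero k)
      (phiState_summandConf_one_zero_ne_zero k') (phiState_mix_eq_zero_of_separated hkS hk'S)

theorem stmt_1 (n : ℕ) (hn : 1 ≤ n) : EntangledAllCuts (phiState n) :=
  stmt_1_general n
end
end

section
/- Under the stated hypotheses, for every i ∈ {1,…,m−1}, every j ∈ {1,…,d}, and all complex coefficients a₁,…,a_m, the vector ψ = Σ_{k=1}^{m} a_k · L_k α_{kj} satisfies ⟨ψ, h_{v_i, u_{i+1}}(V_i) ψ⟩ = |a_i − a_{i+1}|². -/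
open Matrix Kronecker

noncomputable section

/-- The transition term `h_{s,t}(W) = I⊗|s⟩⟨s| + I⊗|t⟩⟨t| − W†⊗|s⟩⟨t| − W⊗|t⟩⟨s|`
on the space `A ⊗ C`, where `A = ℂ^d` and `C` is the clock space with basis `𝒯`. -/
def hGadget {𝒯 : Type*} [Fintype 𝒯] [DecidableEq 𝒯] {d : ℕ}
    (W : Matrix (Fin d) (Fin d) ℂ) (s t : 𝒯) : Matrix (Fin d × 𝒯) (Fin d × 𝒯) ℂ :=
  (1 : Matrix (Fin d) (Fin d) ℂ) ⊗ₖ Matrix.single s s (1 : ℂ) +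
  (1 : Matrix (Fin d) (Fin d) ℂ) ⊗ₖ Matrix.single t t (1 : ℂ) -
  Wᴴ ⊗ₖ Matrix.single s t (1 : ℂ) -
  W ⊗ₖ Matrix.single t s (1 : ℂ)

/-- `chainProd d U V i` is the product `V_{i−1} U_{i−1} ⋯ V₀ U₀` (0-based), i.e., the unitary
mapping `α_j` to `α_{ij}`. -/
def chainProd (d : ℕ) (U V : ℕ → Matrix (Fin d) (Fin d) ℂ) :
    ℕ → Matrix (Fin d) (Fin d) ℂ
  | 0 => 1
  | k + 1 => V k * U k * chainProd d U V k

/-! A vector of `A ⊗ C` is read through its ancilla components `ψ(·, t)` at the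
clock states `t`. Since `L_k` is supported on the block `K_k`, the component of
`ψ = Σ a_k L_k α_{kj}` at `v_i ∈ K_i` is `a_i U_i α_{ij}`, and at `u_{i+1} ∈ K_{i+1}` it is
`a_{i+1} α_{i+1,j} = a_{i+1} V_i U_i α_{ij}`. The gadget `h_{v_i,u_{i+1}}(V_i)` only sees these
two components, and on a pair `(a x, b W x)` with `W` unitary and `‖x‖ = 1` it evaluates to
`|a − b|²`. -/

def clockSlice {ι 𝒯 R : Type*} (ψ : ι × 𝒯 → R) (t : 𝒯) : ι → R :=
  fun a => ψ (a, t)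

lemma dotProduct_kronecker_single_mulVec {ι 𝒯 R : Type*} [Fintype ι] [Fintype 𝒯]
    [DecidableEq 𝒯] [CommSemiring R]
    (W : Matrix ι ι R) (s t : 𝒯) (φ ψ : ι × 𝒯 → R) :
    φ ⬝ᵥ (W ⊗ₖ Matrix.single s t (1 : R)) *ᵥ ψ = clockSlice φ s ⬝ᵥ W *ᵥ clockSlice ψ t := by
  simp [clockSlice, dotProduct, mulVec, Matrix.single, Fintype.sum_prod_type, mul_ite,
    ite_and, Finset.mul_sum, mul_left_comm]

lemma clockSlice_sum_smul_mulVec_of_mem {ι 𝒯 R κ β : Type*} [Semiring R] [Fintype κ]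
    {s : Finset β} (K : β → Finset 𝒯) (L : β → Matrix (ι × 𝒯) κ R) (c : β → R)
    (x : β → κ → R)
    (hdisj : ∀ i ∈ s, ∀ k ∈ s, i ≠ k → Disjoint (K i) (K k))
    (hsupp : ∀ k ∈ s, ∀ a t b, t ∉ K k → L k (a, t) b = 0)
    {i : β} (hi : i ∈ s) {t : 𝒯} (ht : t ∈ K i) :
    clockSlice (∑ k ∈ s, c k • L k *ᵥ x k) t = c i • (fun a b => L i (a, t) b) *ᵥ x i := by
  ext a
  rw [clockSlice, Finset.sum_apply, Finset.sum_eq_single i]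
  · rfl
  · intro k hk hki
    have htk : t ∉ K k := Finset.disjoint_left.mp (hdisj i hi k hk (Ne.symm hki)) ht
    simp [mulVec, dotProduct, hsupp k hk a t _ htk]
  · exact fun h => absurd hi h

lemma star_mulVec_dotProduct_mulVec {n R : Type*} [Fintype n] [DecidableEq n] [Semiring R]
    [StarRing R] {M : Matrix n n R} (hM : Mᴴ * M = 1) (x : n → R) : star (M *ᵥ x) ⬝ᵥ M *ᵥ x = star x ⬝ᵥ x := by
  rw [dotProduct_mulVec, star_mulVec, vecMul_vecMul, hM, vecMul_one]

lemma star_dotProduct_hGadget_mulVec {𝒯 : Type*} [Fintype 𝒯] [DecidableEq 𝒯] {d : ℕ}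
    (W : Matrix (Fin d) (Fin d) ℂ) (s t : 𝒯) (ψ : Fin d × 𝒯 → ℂ) :
    star ψ ⬝ᵥ hGadget W s t *ᵥ ψ =
      star (clockSlice ψ s) ⬝ᵥ clockSlice ψ s + star (clockSlice ψ t) ⬝ᵥ clockSlice ψ t
        - star (clockSlice ψ s) ⬝ᵥ Wᴴ *ᵥ clockSlice ψ t
        - star (clockSlice ψ t) ⬝ᵥ W *ᵥ clockSlice ψ s := by
  simp only [hGadget, sub_mulVec, add_mulVec, dotProduct_sub, dotProduct_add,
    dotProduct_kronecker_single_mulVec, one_mulVec]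
  rfl

lemma star_dotProduct_hGadget_mulVec_eq {𝒯 : Type*} [Fintype 𝒯] [DecidableEq 𝒯] {d : ℕ}
    {W : Matrix (Fin d) (Fin d) ℂ} (hW : Wᴴ * W = 1) {x : Fin d → ℂ} (hx : star x ⬝ᵥ x = 1)
    {s t : 𝒯} {ψ : Fin d × 𝒯 → ℂ} {a b : ℂ}
    (hs : clockSlice ψ s = a • x) (ht : clockSlice ψ t = b • W *ᵥ x) :
    star ψ ⬝ᵥ hGadget W s t *ᵥ ψ = star (a - b) * (a - b) := by
  have hWx : star (W *ᵥ x) ⬝ᵥ W *ᵥ x = 1 := by rw [star_mulVec_dotProduct_mulVec hW, hx]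
  have hxWWx : star x ⬝ᵥ Wᴴ *ᵥ W *ᵥ x = 1 := by rw [mulVec_mulVec, hW, one_mulVec, hx]
  rw [star_dotProduct_hGadget_mulVec, hs, ht]
  simp only [star_smul, smul_dotProduct, mulVec_smul, dotProduct_smul, smul_eq_mul,
    hx, hWx, hxWWx, star_sub]
  ring

lemma chainProd_conjTranspose_mul_self {d : ℕ} {U V : ℕ → Matrix (Fin d) (Fin d) ℂ} {k : ℕ}
    (hU : ∀ l < k, (U l)ᴴ * U l = 1) (hV : ∀ l < k, (V l)ᴴ * V l = 1) :
    (chainProd d U V k)ᴴ * chainProd d U V k = 1 := by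
  induction k with
  | zero => simp [chainProd]
  | succ n ih =>
    calc (chainProd d U V (n + 1))ᴴ * chainProd d U V (n + 1)
        = (chainProd d U V n)ᴴ * ((U n)ᴴ * ((V n)ᴴ * V n) * U n) * chainProd d U V n := by
          simp [chainProd, conjTranspose_mul, mul_assoc]
      _ = 1 := by
          rw [hV n n.lt_succ_self, mul_one, hU n n.lt_succ_self, mul_one,
            ih (fun l hl => hU l (hl.trans n.lt_succ_self))
              (fun l hl => hV l (hl.trans n.lt_succ_self))]

theorem stmt_7_general (𝒯 : Type) [Fintype 𝒯] [DecidableEq 𝒯] (d m : ℕ)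
    (K : ℕ → Finset 𝒯) (u v : ℕ → 𝒯)
    (L : ℕ → Matrix (Fin d × 𝒯) (Fin d) ℂ)
    (U V : ℕ → Matrix (Fin d) (Fin d) ℂ)
    -- the `K i` partition the clock basis
    (hKdisj : ∀ i < m, ∀ j < m, i ≠ j → Disjoint (K i) (K j))
    (hu : ∀ i < m, u i ∈ K i) (hv : ∀ i < m, v i ∈ K i)
    -- `L i : A → 𝒦_i` with `L_i† L_i = λ_i • I` and `λ_i ≥ 1`
    (hLsupp : ∀ i < m, ∀ (a : Fin d) (t : 𝒯) (b : Fin d), t ∉ K i → L i (a, t) b = 0)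
    -- `(I_A ⊗ ⟨u_i|) L_i = I_A` and `(I_A ⊗ ⟨v_i|) L_i = U_i` with `U_i` unitary
    (hLu : ∀ i < m, (fun a b => L i (a, u i) b) = (1 : Matrix (Fin d) (Fin d) ℂ))
    (hLv : ∀ i < m, (fun a b => L i (a, v i) b) = U i)
    (hU : ∀ i < m, (U i)ᴴ * U i = 1 ∧ U i * (U i)ᴴ = 1)
    (hV : ∀ i < m - 1, (V i)ᴴ * V i = 1 ∧ V i * (V i)ᴴ = 1)
    (i : ℕ) (hi : i < m - 1) (j : Fin d) (a : ℕ → ℂ) :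
    star (∑ k ∈ Finset.range m,
        a k • (L k).mulVec ((chainProd d U V k).mulVec (Pi.single j 1))) ⬝ᵥ
      (hGadget (V i) (v i) (u (i + 1))).mulVec
        (∑ k ∈ Finset.range m,
          a k • (L k).mulVec ((chainProd d U V k).mulVec (Pi.single j 1))) =
      ((‖a i - a (i + 1)‖ : ℝ) : ℂ) ^ 2 := by
  have hdisj := fun i hi k hk => hKdisj i (Finset.mem_range.1 hi) k (Finset.mem_range.1 hk)
  have hsupp := fun k hk => hLsupp k (Finset.mem_range.1 hk)
  have hi₀ : i < m := by omega
  have hi₁ : i + 1 < m := by omega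
  set x := U i *ᵥ chainProd d U V i *ᵥ Pi.single j 1
  have hx : star x ⬝ᵥ x = 1 := by
    rw [star_mulVec_dotProduct_mulVec (hU i hi₀).1, star_mulVec_dotProduct_mulVec
      (chainProd_conjTranspose_mul_self (fun l hl => (hU l (by omega)).1)
        (fun l hl => (hV l (by omega)).1))]
    simp
  rw [star_dotProduct_hGadget_mulVec_eq (hV i hi).1 hx (a := a i) (b := a (i + 1)),
    RCLike.star_def, Complex.conj_mul']
  · rw [clockSlice_sum_smul_mulVec_of_mem K L a _ hdisj hsupp (Finset.mem_range.2 hi₀)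
      (hv i hi₀), hLv i hi₀]
  · rw [clockSlice_sum_smul_mulVec_of_mem K L a _ hdisj hsupp (Finset.mem_range.2 hi₁)
      (hu (i + 1) hi₁), hLu (i + 1) hi₁, one_mulVec, chainProd, ← mulVec_mulVec,
      ← mulVec_mulVec]

theorem stmt_7 (𝒯 : Type) [Fintype 𝒯] [DecidableEq 𝒯] (d m : ℕ)
    (hd : 1 ≤ d) (hm : 1 ≤ m)
    (K : ℕ → Finset 𝒯) (u v : ℕ → 𝒯)
    (L : ℕ → Matrix (Fin d × 𝒯) (Fin d) ℂ) (lam : ℕ → ℝ)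
    (U V : ℕ → Matrix (Fin d) (Fin d) ℂ)
    -- the `K i` partition the clock basis
    (hKdisj : ∀ i < m, ∀ j < m, i ≠ j → Disjoint (K i) (K j))
    (hKcover : ∀ t : 𝒯, ∃ i < m, t ∈ K i)
    (hKne : ∀ i < m, (K i).Nonempty)
    (hu : ∀ i < m, u i ∈ K i) (hv : ∀ i < m, v i ∈ K i) (huv : ∀ i < m, u i ≠ v i)
    -- `L i : A → 𝒦_i` with `L_i† L_i = λ_i • I` and `λ_i ≥ 1`
    (hLsupp : ∀ i < m, ∀ (a : Fin d) (t : 𝒯) (b : Fin d), t ∉ K i → L i (a, t) b = 0)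
    (hLiso : ∀ i < m, (L i)ᴴ * L i = (lam i : ℂ) • (1 : Matrix (Fin d) (Fin d) ℂ))
    (hlam : ∀ i < m, 1 ≤ lam i)
    -- `(I_A ⊗ ⟨u_i|) L_i = I_A` and `(I_A ⊗ ⟨v_i|) L_i = U_i` with `U_i` unitary
    (hLu : ∀ i < m, (fun a b => L i (a, u i) b) = (1 : Matrix (Fin d) (Fin d) ℂ))
    (hLv : ∀ i < m, (fun a b => L i (a, v i) b) = U i)
    (hU : ∀ i < m, (U i)ᴴ * U i = 1 ∧ U i * (U i)ᴴ = 1)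
    (hV : ∀ i < m - 1, (V i)ᴴ * V i = 1 ∧ V i * (V i)ᴴ = 1)
    (i : ℕ) (hi : i < m - 1) (j : Fin d) (a : ℕ → ℂ) :
    star (∑ k ∈ Finset.range m,
        a k • (L k).mulVec ((chainProd d U V k).mulVec (Pi.single j 1))) ⬝ᵥ
      (hGadget (V i) (v i) (u (i + 1))).mulVec
        (∑ k ∈ Finset.range m,
          a k • (L k).mulVec ((chainProd d U V k).mulVec (Pi.single j 1))) =
      ((‖a i - a (i + 1)‖ : ℝ) : ℂ) ^ 2 :=
  stmt_7_general 𝒯 d m K u v L U V hKdisj hu hv hLsupp hLu hLv hU hV i hi j a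
end
end

section
/- For all i, j ∈ {1,…,d}: (I_{α_ℓ β} ⊗ ⟨c_i*|_{α_r}) ψ_j = 0 if i ≠ j, and (I_{α_ℓ β} ⊗ ⟨c_i*|_{α_r}) ψ_i = √(1/6) · ( |0,0⟩_{α_ℓ}|2⟩_{β} + |0,1⟩_{α_ℓ}|0⟩_{β} ). -/
noncomputable section

/-- The bin space: basis `|c₁,c₂⟩` with `c₁ + c₂ ≤ B = 2d`. -/
abbrev Sig (d : ℕ) := {p : Fin (2 * d + 1) × Fin (2 * d + 1) // p.1.val + p.2.val ≤ 2 * d}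

/-- `ℂ^{d″} ⊗ ℂ³ ⊗ ℂ^{d″}`, with factors labeled `α_ℓ`, `β`, `α_r`. -/
abbrev Cfg (d : ℕ) := Sig d × Fin 3 × Sig d

/-- The number of red balls in a bin. -/
def n1 {d : ℕ} (s : Sig d) : ℕ := s.val.1.val

/-- The number of black balls in a bin. -/
def n2 {d : ℕ} (s : Sig d) : ℕ := s.val.2.val

/-- The set of valid configurations `C_i`: in total `c_{i,1} = 2i` red balls and
`c_{i,2} + 1 = 2d − 2i + 1` black balls. -/
def inC (d i : ℕ) (x : Cfg d) : Prop :=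
  n1 x.1 + n1 x.2.2 + (if x.2.1 = (1 : Fin 3) then 1 else 0) = 2 * i ∧
  n2 x.1 + n2 x.2.2 + (if x.2.1 = (2 : Fin 3) then 1 else 0) = (2 * d - 2 * i) + 1

instance {d i : ℕ} : DecidablePred (inC d i) := fun x => by unfold inC; infer_instance

/-- The set `C_i*` of configurations in `C_i` with `(l₁,l₂) = c_i*` or `(r₁,r₂) = c_i*`. -/
def isStar (d i : ℕ) (x : Cfg d) : Prop :=
  inC d i x ∧
    ((n1 x.1 = 2 * i ∧ n2 x.1 = 2 * d - 2 * i) ∨ (n1 x.2.2 = 2 * i ∧ n2 x.2.2 = 2 * d - 2 * i))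

instance {d i : ℕ} : DecidablePred (isStar d i) := fun x => by unfold isStar; infer_instance

/-- `|C_i ∖ C_i*|`. -/
def nstar (d i : ℕ) : ℕ :=
  (Finset.univ.filter (fun x : Cfg d => inC d i x ∧ ¬ isStar d i x)).card

/-- The logical state `ψ_i`, with weight `√(1/6)` on `C_i*` and `√(1/(3|C_i∖C_i*|))`
on `C_i ∖ C_i*`. -/
def psiB (d i : ℕ) : Cfg d → ℂ := fun x =>
  if isStar d i x then (Real.sqrt (1 / 6) : ℂ)
  else if inC d i x then (Real.sqrt (1 / (3 * (nstar d i : ℝ))) : ℂ)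
  else 0

/-- The penalized configurations of one bin/qutrit pair:
`|0,0⟩|0⟩`, `|0,B⟩|2⟩`, `|B,0⟩|1⟩`, and `|c₁,c₂⟩|2⟩` for `c₁+c₂ = B` with `c₁` odd. -/
def penal (d : ℕ) (p : Sig d × Fin 3) : Prop :=
  (n1 p.1 = 0 ∧ n2 p.1 = 0 ∧ p.2 = 0) ∨
  (n1 p.1 = 0 ∧ n2 p.1 = 2 * d ∧ p.2 = 2) ∨
  (n1 p.1 = 2 * d ∧ n2 p.1 = 0 ∧ p.2 = 1) ∨
  (n1 p.1 + n2 p.1 = 2 * d ∧ n1 p.1 % 2 = 1 ∧ p.2 = 2)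

instance {d : ℕ} : DecidablePred (penal d) := fun p => by unfold penal; infer_instance

/-- The sum of the penalty (rank-one) terms of `H_ball/2`. -/
def penMat (d : ℕ) : Matrix (Sig d × Fin 3) (Sig d × Fin 3) ℂ :=
  fun p q => if p = q ∧ penal d p then 1 else 0

/-- `(p, q)` is one of the transitions included in `H_ball/2`:
`((c₁,c₂,0),(c₁−1,c₂,1))` and `((c₁,c₂,2),(c₁−1,c₂+1,1))` for `c₁ > 0`, and
`((c₁,c₂,0),(c₁,c₂−1,1))` and `((c₁,c₂,1),(c₁+1,c₂−1,2))` for `c₂ > 0`. -/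
def isTrans (d : ℕ) (p q : Sig d × Fin 3) : Prop :=
  (p.2 = 0 ∧ q.2 = 1 ∧ 0 < n1 p.1 ∧ n1 q.1 = n1 p.1 - 1 ∧ n2 q.1 = n2 p.1) ∨
  (p.2 = 2 ∧ q.2 = 1 ∧ 0 < n1 p.1 ∧ n1 q.1 = n1 p.1 - 1 ∧ n2 q.1 = n2 p.1 + 1) ∨
  (p.2 = 0 ∧ q.2 = 1 ∧ 0 < n2 p.1 ∧ n1 q.1 = n1 p.1 ∧ n2 q.1 = n2 p.1 - 1) ∨
  (p.2 = 1 ∧ q.2 = 2 ∧ 0 < n2 p.1 ∧ n1 q.1 = n1 p.1 + 1 ∧ n2 q.1 = n2 p.1 - 1)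

instance {d : ℕ} (p q : Sig d × Fin 3) : Decidable (isTrans d p q) := by
  unfold isTrans; infer_instance

/-- `w̄_i = 1/(3·|C_i∖C_i*|)`. -/
def wbar (d i : ℕ) : ℝ := 1 / (3 * (nstar d i : ℝ))

/-- The pair of weights `(w_a, w_b)` used in the transition term
`T((a₁,a₂,m_a),(b₁,b₂,m_b))`: `(w_i*, w̄_i)` if `(a₁,a₂) = c_i*` for some `i ∈ {1,…,d}`,
`(w̄_i, w_i*)` if `(b₁,b₂) = c_i*` for some `i`, and `(1,1)` otherwise
(a pair `(c₁,c₂)` equals some `c_i*` iff `c₁ + c₂ = 2d`, `c₁` is even and `c₁ ≥ 2`). -/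
def wpair (d : ℕ) (a b : ℕ × ℕ) : ℝ × ℝ :=
  if a.1 + a.2 = 2 * d ∧ a.1 % 2 = 0 ∧ 2 ≤ a.1 then (1 / 6, wbar d (a.1 / 2))
  else if b.1 + b.2 = 2 * d ∧ b.1 % 2 = 0 ∧ 2 ≤ b.1 then (wbar d (b.1 / 2), 1 / 6)
  else (1, 1)

/-- The ball numbers of a bin, as a pair. -/
def pairOf {d : ℕ} (s : Sig d) : ℕ × ℕ := (n1 s, n2 s)

/-- Basis state of the bin/qutrit pair space. -/
def ketST {d : ℕ} (p : Sig d × Fin 3) : (Sig d × Fin 3) → ℂ := fun q => if q = p then 1 else 0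

/-- The vector `√(w_b)|a₁,a₂⟩|m_a⟩ − √(w_a)|b₁,b₂⟩|m_b⟩`. -/
def vT (d : ℕ) (a b : Sig d × Fin 3) : (Sig d × Fin 3) → ℂ :=
  (Real.sqrt (wpair d (pairOf a.1) (pairOf b.1)).2 : ℂ) • ketST a -
    (Real.sqrt (wpair d (pairOf a.1) (pairOf b.1)).1 : ℂ) • ketST b

/-- The transition term `T((a₁,a₂,m_a),(b₁,b₂,m_b))`. -/
def Tmat (d : ℕ) (a b : Sig d × Fin 3) : Matrix (Sig d × Fin 3) (Sig d × Fin 3) ℂ :=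
  Matrix.vecMulVec (vT d a b) (star (vT d a b))

/-- `H_ball/2` on `ℂ^{d″} ⊗ ℂ³`: the penalty terms plus all transition terms. -/
def Hhalf (d : ℕ) : Matrix (Sig d × Fin 3) (Sig d × Fin 3) ℂ :=
  penMat d + ∑ p : Sig d × Fin 3, ∑ q : Sig d × Fin 3,
    (if isTrans d p q then Tmat d p q else 0)

/-- `H_ball = (H_ball/2)_{α_ℓ β} + (H_ball/2)_{α_r β}` on `ℂ^{d″} ⊗ ℂ³ ⊗ ℂ^{d″}`. -/
def Hball (d : ℕ) : Matrix (Cfg d) (Cfg d) ℂ :=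
  (fun x y => if x.2.2 = y.2.2 then Hhalf d (x.1, x.2.1) (y.1, y.2.1) else 0) +
  (fun x y => if x.1 = y.1 then Hhalf d (x.2.2, x.2.1) (y.2.2, y.2.1) else 0)

/-- The bin basis state `c_i* = |2i, 2d − 2i⟩`. -/
def cstar (d i : ℕ) (hi : i ≤ d) : Sig d :=
  ⟨(⟨2 * i, by omega⟩, ⟨2 * d - 2 * i, by omega⟩), by show 2 * i + (2 * d - 2 * i) ≤ 2 * d; omega⟩

section

variable {d : ℕ}

@[simp] lemma n1_cstar (i : ℕ) (hi : i ≤ d) : n1 (cstar d i hi) = 2 * i := rfl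

@[simp] lemma n2_cstar (i : ℕ) (hi : i ≤ d) : n2 (cstar d i hi) = 2 * d - 2 * i := rfl

lemma psiB_of_not_inC {i : ℕ} {x : Cfg d} (hx : ¬ inC d i x) : psiB d i x = 0 := by
  simp [psiB, isStar, hx]

lemma psiB_of_isStar {i : ℕ} {x : Cfg d} (hx : isStar d i x) :
    psiB d i x = (Real.sqrt (1 / 6) : ℂ) :=
  if_pos hx

lemma isStar_right_cstar_iff {i : ℕ} (hi : i ≤ d) (l : Sig d) (m : Fin 3) :
    isStar d i (l, m, cstar d i hi) ↔ inC d i (l, m, cstar d i hi) := by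
  simp [isStar]

/-- Counting all balls, a right bin `c_i*` leaves exactly one ball for the left bin and the
qutrit together; parity of the red count forces that ball to be black and `i = j`. -/
lemma inC_right_cstar_iff {i j : ℕ} (hi : i ≤ d) (hj : j ≤ d) (l : Sig d) (m : Fin 3) :
    inC d j (l, m, cstar d i hi) ↔
      i = j ∧ ((n1 l = 0 ∧ n2 l = 0 ∧ m = 2) ∨ (n1 l = 0 ∧ n2 l = 1 ∧ m = 0)) := by
  simp only [inC, n1_cstar, n2_cstar]
  fin_cases m <;>
    simp only [n1, n2, Fin.zero_eta, Fin.mk_one, Fin.reduceFinMk, Fin.isValue, Fin.reduceEq,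
      zero_ne_one, one_ne_zero, ↓reduceIte, and_true, and_false, or_false, false_or, or_self,
      iff_false, not_and] <;>
    omega

end

theorem stmt_17_general (d i j : ℕ)
    (hi2 : i ≤ d) (hj2 : j ≤ d) :
    (i ≠ j → ∀ (l : Sig d) (m : Fin 3), psiB d j (l, m, cstar d i hi2) = 0) ∧
    (∀ (l : Sig d) (m : Fin 3),
      psiB d i (l, m, cstar d i hi2) =
        (Real.sqrt (1 / 6) : ℂ) *
          ((if n1 l = 0 ∧ n2 l = 0 ∧ m = 2 then 1 else 0) +
            (if n1 l = 0 ∧ n2 l = 1 ∧ m = 0 then 1 else 0))) := by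
  refine ⟨fun hij l m => psiB_of_not_inC fun h => hij ((inC_right_cstar_iff hi2 hj2 l m).1 h).1,
    fun l m => ?_⟩
  by_cases hC : inC d i (l, m, cstar d i hi2)
  · rw [psiB_of_isStar ((isStar_right_cstar_iff hi2 l m).2 hC)]
    rcases ((inC_right_cstar_iff hi2 hi2 l m).1 hC).2 with ⟨h₁, h₂, rfl⟩ | ⟨h₁, h₂, rfl⟩ <;>
      simp [h₁, h₂]
  · obtain ⟨hA, hB⟩ : ¬ (n1 l = 0 ∧ n2 l = 0 ∧ m = 2) ∧ ¬ (n1 l = 0 ∧ n2 l = 1 ∧ m = 0) := by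
      simpa only [true_and, not_or] using (inC_right_cstar_iff hi2 hi2 l m).not.1 hC
    rw [psiB_of_not_inC hC, if_neg hA, if_neg hB]
    ring

theorem stmt_17 (d i j : ℕ) (hd : 1 ≤ d)
    (hi1 : 1 ≤ i) (hi2 : i ≤ d) (hj1 : 1 ≤ j) (hj2 : j ≤ d) :
    (i ≠ j → ∀ (l : Sig d) (m : Fin 3), psiB d j (l, m, cstar d i hi2) = 0) ∧
    (∀ (l : Sig d) (m : Fin 3),
      psiB d i (l, m, cstar d i hi2) =
        (Real.sqrt (1 / 6) : ℂ) *
          ((if n1 l = 0 ∧ n2 l = 0 ∧ m = 2 then 1 else 0) +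
            (if n1 l = 0 ∧ n2 l = 1 ∧ m = 0 then 1 else 0))) :=
  stmt_17_general d i j hi2 hj2
end
end
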